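/- arXiv:1511.07419 — 3 statements merged into one kernel-verified Lean document; each statement's English description precedes it below -/
import Mathlib

section
/- Let (ε_n) be i.i.d. strictly positive random variables and set m = inf{z ≥ 0 : P(ε_1 ≤ z) > 0}. If m ≤ 1, then for every A > 0, P(∑_{n=1}^∞ (ε_1⋯ε_n)^{−1} > A) > 0; consequently ρ(x) = P(Z < x/c − 1) < 1 for every x and c > 0. -/
/-!
Since the essential infimum of `ε₁` is at most `1`, for every `b > 1` the event `ε₁ ≤ b` has
positive probability, and by independence so has `ε₁, …, ε_N ≤ b`. On that event the first `N`
terms of `Z` are each at least `b⁻ᴺ`, so `Z ≥ N / bᴺ`; choosing `N > A` and then `b` close enough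
to `1` makes this exceed `A`. The bound `ρ < 1` is the complementary statement.
-/

open MeasureTheory ProbabilityTheory
open scoped ENNReal

/-- The random series `Z = ∑_{n≥1} (ε_1 ε_2 ⋯ ε_n)⁻¹` (with `ε j` playing the
role of `ε_{j+1}`), valued in `ℝ≥0∞` so that divergence is recorded as `∞`. -/
noncomputable def Z {Ω : Type*} (ε : ℕ → Ω → ℝ) (ω : Ω) : ℝ≥0∞ :=
  ∑' n : ℕ, ENNReal.ofReal ((∏ j ∈ Finset.range (n + 1), ε j ω)⁻¹)

open Filter Topology

lemma exists_lt_natCast_div_pow (A : ℝ) : ∃ N : ℕ, ∃ b > 1, A < N / b ^ N := by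
  obtain ⟨N, hN⟩ := exists_nat_gt A
  have hcont : ContinuousAt (fun b : ℝ => (N : ℝ) / b ^ N) 1 :=
    continuousAt_const.div (continuous_pow N).continuousAt (by simp)
  have hnear : ∀ᶠ b in 𝓝[>] (1 : ℝ), A < N / b ^ N :=
    nhdsWithin_le_nhds (hcont.eventually (lt_mem_nhds (by simpa using hN)))
  obtain ⟨b, hbA, hb⟩ := (hnear.and self_mem_nhdsWithin).exists
  exact ⟨N, b, hb, hbA⟩

lemma natCast_div_pow_le_Z {Ω : Type*} {ε : ℕ → Ω → ℝ} {ω : Ω} {N : ℕ} {b : ℝ} (hb : 1 ≤ b)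
    (hpos : ∀ j < N, 0 < ε j ω) (hle : ∀ j < N, ε j ω ≤ b) :
    ENNReal.ofReal (N / b ^ N) ≤ Z ε ω := by
  have hterm : ∀ n < N, (b ^ N)⁻¹ ≤ (∏ j ∈ Finset.range (n + 1), ε j ω)⁻¹ := by
    intro n hn
    have hlt : ∀ j ∈ Finset.range (n + 1), j < N := fun j hj => by
      rw [Finset.mem_range] at hj; omega
    refine inv_anti₀ (Finset.prod_pos fun j hj => hpos j (hlt j hj)) ?_
    calc ∏ j ∈ Finset.range (n + 1), ε j ω
        ≤ ∏ _j ∈ Finset.range (n + 1), b :=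
          Finset.prod_le_prod (fun j hj => (hpos j (hlt j hj)).le) fun j hj => hle j (hlt j hj)
      _ = b ^ (n + 1) := by rw [Finset.prod_const, Finset.card_range]
      _ ≤ b ^ N := pow_le_pow_right₀ hb hn
  calc ENNReal.ofReal (N / b ^ N)
      = ∑ n ∈ Finset.range N, ENNReal.ofReal (b ^ N)⁻¹ := by
        rw [Finset.sum_const, Finset.card_range, nsmul_eq_mul, ← ENNReal.ofReal_natCast,
          ← ENNReal.ofReal_mul N.cast_nonneg, div_eq_mul_inv]
    _ ≤ ∑ n ∈ Finset.range N, ENNReal.ofReal (∏ j ∈ Finset.range (n + 1), ε j ω)⁻¹ :=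
        Finset.sum_le_sum fun n hn => ENNReal.ofReal_le_ofReal (hterm n (Finset.mem_range.mp hn))
    _ ≤ Z ε ω := ENNReal.sum_le_tsum _

section

variable {Ω : Type*} [MeasurableSpace Ω] {μ : Measure Ω}

lemma measure_le_pos_of_sInf_lt [NeZero μ] {X : Ω → ℝ} {a : ℝ}
    (h : sInf {z : ℝ | 0 ≤ z ∧ 0 < μ {ω | X ω ≤ z}} < a) : 0 < μ {ω | X ω ≤ a} := by
  -- `sInf ∅ = 0` in `ℝ`, so the hypothesis alone says nothing without nonemptiness.
  have hne : {z : ℝ | 0 ≤ z ∧ 0 < μ {ω | X ω ≤ z}}.Nonempty := by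
    have hcover : ⋃ k : ℕ, {ω | X ω ≤ k} = Set.univ :=
      Set.eq_univ_of_forall fun ω => Set.mem_iUnion.mpr ⟨⌈X ω⌉₊, Nat.le_ceil (X ω)⟩
    obtain ⟨k, hk⟩ := exists_measure_pos_of_not_measure_iUnion_null (μ := μ)
      (hcover ▸ (NeZero.ne (μ Set.univ)) : μ (⋃ k : ℕ, {ω | X ω ≤ k}) ≠ 0)
    exact ⟨k, k.cast_nonneg, hk⟩
  obtain ⟨z, ⟨-, hz⟩, hza⟩ := exists_lt_of_csInf_lt hne h
  exact hz.trans_le (measure_mono fun ω hω => hω.trans hza.le)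

lemma measure_biInter_preimage_eq_pow {β : Type*} [MeasurableSpace β] {ε : ℕ → Ω → β}
    (hindep : iIndepFun ε μ) (hident : ∀ n, IdentDistrib (ε n) (ε 0) μ μ)
    {s : Set β} (hs : MeasurableSet s) (N : ℕ) :
    μ (⋂ j ∈ Finset.range N, ε j ⁻¹' s) = μ (ε 0 ⁻¹' s) ^ N := by
  rw [hindep.meas_biInter fun j _ => ⟨s, hs, rfl⟩,
    Finset.prod_congr rfl fun j _ => (hident j).measure_mem_eq hs]
  simp

lemma measurable_Z {ε : ℕ → Ω → ℝ} (hmeas : ∀ n, Measurable (ε n)) : Measurable (Z ε) :=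
  Measurable.tsum fun _ =>
    (Finset.measurable_prod _ fun j _ => hmeas j).inv.ennreal_ofReal

lemma measure_ofReal_lt_Z_pos [NeZero μ] {ε : ℕ → Ω → ℝ} (hpos : ∀ n ω, 0 < ε n ω)
    (hindep : iIndepFun ε μ) (hident : ∀ n, IdentDistrib (ε n) (ε 0) μ μ)
    (hess : sInf {z : ℝ | 0 ≤ z ∧ 0 < μ {ω | ε 0 ω ≤ z}} ≤ 1) {A : ℝ} (hA : 0 < A) :
    0 < μ {ω | ENNReal.ofReal A < Z ε ω} := by
  obtain ⟨N, b, hb, hAb⟩ := exists_lt_natCast_div_pow A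
  have hbounded : 0 < μ (⋂ j ∈ Finset.range N, ε j ⁻¹' Set.Iic b) := by
    rw [measure_biInter_preimage_eq_pow hindep hident measurableSet_Iic]
    exact ENNReal.pow_pos (measure_le_pos_of_sInf_lt (hess.trans_lt hb)) N
  refine hbounded.trans_le (measure_mono fun ω hω => ?_)
  simp only [Set.mem_iInter, Finset.mem_range, Set.mem_preimage, Set.mem_Iic] at hω
  exact ((ENNReal.ofReal_lt_ofReal_iff_of_nonneg hA.le).mpr hAb).trans_le
    (natCast_div_pow_le_Z hb.le (fun j _ => hpos j ω) hω)

end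

/-- If the essential infimum `m = inf {z ≥ 0 : P(ε₁ ≤ z) > 0}` satisfies
`m ≤ 1`, then `P(Z > A) > 0` for every `A > 0`; consequently
`ρ(x) = P(Z < x/c - 1) < 1` for every `x` and every `c > 0`. -/
theorem rho_lt_one_of_essInf_le_one
    {Ω : Type*} [MeasurableSpace Ω] (μ : Measure Ω) [IsProbabilityMeasure μ]
    (ε : ℕ → Ω → ℝ) (hmeas : ∀ n, Measurable (ε n))
    (hpos : ∀ n ω, 0 < ε n ω)
    (hindep : iIndepFun ε μ)
    (hident : ∀ n, IdentDistrib (ε n) (ε 0) μ μ)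
    (m : ℝ) (hm : m = sInf {z : ℝ | 0 ≤ z ∧ 0 < μ {ω | ε 0 ω ≤ z}})
    (hm1 : m ≤ 1) :
    (∀ A : ℝ, 0 < A → 0 < μ {ω | ENNReal.ofReal A < Z ε ω}) ∧
      ∀ x c : ℝ, 0 < c →
        μ {ω | Z ε ω < ENNReal.ofReal (x / c - 1)} < 1 := by
  have hlarge : ∀ A : ℝ, 0 < A → 0 < μ {ω | ENNReal.ofReal A < Z ε ω} :=
    fun A hA => measure_ofReal_lt_Z_pos hpos hindep hident (hm ▸ hm1) hA
  refine ⟨hlarge, fun x c _ => ?_⟩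
  set A := max (x / c - 1) 1
  have hsub : {ω | Z ε ω < ENNReal.ofReal (x / c - 1)} ⊆ {ω | ENNReal.ofReal A < Z ε ω}ᶜ :=
    fun ω hω => not_lt.mpr (hω.le.trans (ENNReal.ofReal_le_ofReal (le_max_left _ _)))
  calc μ {ω | Z ε ω < ENNReal.ofReal (x / c - 1)}
      ≤ μ {ω | ENNReal.ofReal A < Z ε ω}ᶜ := measure_mono hsub
    _ < 1 - 0 := prob_compl_lt_one_sub_of_lt_prob (hlarge A (by positivity))
        (measurableSet_lt measurable_const (measurable_Z hmeas))
    _ = 1 := tsub_zero 1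
end

section
/- Let (ε_n) be i.i.d. strictly positive random variables with E log ε_1 > 0 and essential infimum m > 1. Then the essential supremum d_2 of Z = ∑_{n≥1}(ε_1⋯ε_n)^{−1} equals 1/(m−1). If instead m ≤ 1, then d_2 = ∞, i.e., P(Z ≥ A) > 0 for every A > 0. -/
open MeasureTheory ProbabilityTheory
open scoped ENNReal

lemma hasSum_inv_pow_succ {c : ℝ} (hc : 1 < c) :
    HasSum (fun n : ℕ => c⁻¹ ^ (n + 1)) (1 / (c - 1)) := by
  have hc0 : 0 < c := one_pos.trans hc
  have h := (hasSum_geometric_of_lt_one (by positivity) (inv_lt_one_of_one_lt₀ hc)).mul_left c⁻¹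
  have hsum : c⁻¹ * (1 - c⁻¹)⁻¹ = 1 / (c - 1) := by
    field_simp
  simpa only [hsum, ← pow_succ'] using h

lemma tsum_ofReal_inv_pow_succ {c : ℝ} (hc : 1 < c) :
    ∑' n : ℕ, ENNReal.ofReal (c⁻¹ ^ (n + 1)) = ENNReal.ofReal (1 / (c - 1)) := by
  have hc0 : 0 < c := one_pos.trans hc
  rw [← ENNReal.ofReal_tsum_of_nonneg (fun n => by positivity) (hasSum_inv_pow_succ hc).summable,
    (hasSum_inv_pow_succ hc).tsum_eq]

section Series

variable {Ω : Type*} {ε : ℕ → Ω → ℝ} {ω : Ω} {c : ℝ}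

lemma Z_le_of_forall_le (hc : 1 < c) (h : ∀ n, c ≤ ε n ω) :
    Z ε ω ≤ ENNReal.ofReal (1 / (c - 1)) := by
  have hc0 : 0 < c := one_pos.trans hc
  rw [← tsum_ofReal_inv_pow_succ hc]
  refine ENNReal.tsum_le_tsum fun n => ENNReal.ofReal_le_ofReal ?_
  have hprod : c ^ (n + 1) ≤ ∏ j ∈ Finset.range (n + 1), ε j ω := by
    simpa using Finset.prod_le_prod (fun _ _ => hc0.le) (fun j _ => h j)
      (s := Finset.range (n + 1)) (f := fun _ => c)
  rw [inv_pow]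
  exact inv_anti₀ (by positivity) hprod

lemma sum_ofReal_inv_pow_succ_le_Z (hpos : ∀ n, 0 < ε n ω) {N : ℕ} (h : ∀ n < N, ε n ω ≤ c) :
    ∑ n ∈ Finset.range N, ENNReal.ofReal (c⁻¹ ^ (n + 1)) ≤ Z ε ω := by
  refine le_trans (Finset.sum_le_sum fun n hn => ENNReal.ofReal_le_ofReal ?_)
    (ENNReal.sum_le_tsum _)
  have hn := Finset.mem_range.1 hn
  have hprod : ∏ j ∈ Finset.range (n + 1), ε j ω ≤ c ^ (n + 1) := by
    simpa using Finset.prod_le_prod (fun j _ => (hpos j).le)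
      (fun j hj => h j (by rw [Finset.mem_range] at hj; omega))
      (s := Finset.range (n + 1)) (g := fun _ => c)
  rw [inv_pow]
  exact inv_anti₀ (Finset.prod_pos fun j _ => hpos j) hprod

end Series

/-- `d₂` and `m` of the paper are `upperEnd (Z ε) μ` and `lowerEnd (ε 0) μ`. -/
noncomputable def upperEnd {Ω α : Type*} [MeasurableSpace Ω] [CompleteLattice α]
    (f : Ω → α) (μ : Measure Ω) : α :=
  sSup {z : α | 0 < μ {ω | z ≤ f ω}}

noncomputable def lowerEnd {Ω : Type*} [MeasurableSpace Ω] (X : Ω → ℝ) (μ : Measure Ω) : ℝ :=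
  sInf {z : ℝ | 0 ≤ z ∧ 0 < μ {ω | X ω ≤ z}}

section Ends

variable {Ω : Type*} [MeasurableSpace Ω] {μ : Measure Ω}

lemma measure_le_pos_of_lt_upperEnd {α : Type*} [CompleteLinearOrder α] {f : Ω → α} {w : α}
    (hw : w < upperEnd f μ) : 0 < μ {ω | w ≤ f ω} := by
  obtain ⟨z, hz, hwz⟩ := lt_sSup_iff.1 hw
  exact hz.trans_le (measure_mono fun ω hω => hwz.le.trans hω)

lemma upperEnd_le_of_ae_le {α : Type*} [CompleteLattice α] {f : Ω → α} {a : α}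
    (h : ∀ᵐ ω ∂μ, f ω ≤ a) : upperEnd f μ ≤ a := by
  refine sSup_le fun z hz => ?_
  have hfreq : ∃ᵐ ω ∂μ, z ≤ f ω := frequently_ae_iff.2 hz.ne'
  obtain ⟨ω, hzω, hωa⟩ := (hfreq.and_eventually h).exists
  exact hzω.trans hωa

variable {X : Ω → ℝ}

lemma measure_le_eq_zero_of_lt_lowerEnd (hX : ∀ ω, 0 ≤ X ω) {z : ℝ} (hz : z < lowerEnd X μ) :
    μ {ω | X ω ≤ z} = 0 := by
  rcases lt_or_ge z 0 with hz0 | hz0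
  · have hempty : {ω | X ω ≤ z} = ∅ :=
      Set.eq_empty_of_forall_notMem fun ω hω => (hX ω).not_gt (lt_of_le_of_lt hω hz0)
    rw [hempty, measure_empty]
  · by_contra h
    exact notMem_of_lt_csInf hz ⟨0, fun _ hy => hy.1⟩ ⟨hz0, pos_iff_ne_zero.2 h⟩

lemma measure_lt_lowerEnd_eq_zero (hX : ∀ ω, 0 ≤ X ω) : μ {ω | X ω < lowerEnd X μ} = 0 := by
  have hsub : {ω | X ω < lowerEnd X μ} ⊆ ⋃ k : ℕ, {ω | X ω ≤ lowerEnd X μ - 1 / (k + 1)} := by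
    intro ω (hω : X ω < lowerEnd X μ)
    obtain ⟨k, hk⟩ := exists_nat_one_div_lt (sub_pos.2 hω)
    exact Set.mem_iUnion.2 ⟨k, show X ω ≤ _ by linarith⟩
  exact measure_mono_null hsub (measure_iUnion_null fun k =>
    measure_le_eq_zero_of_lt_lowerEnd hX (sub_lt_self _ (by positivity)))

lemma measure_le_pos_of_lowerEnd_lt [NeZero μ] {c : ℝ} (hc : lowerEnd X μ < c) :
    0 < μ {ω | X ω ≤ c} := by
  have hne : {z : ℝ | 0 ≤ z ∧ 0 < μ {ω | X ω ≤ z}}.Nonempty := by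
    by_contra h
    have hnull : ∀ k : ℕ, μ {ω | X ω ≤ k} = 0 := fun k => by
      by_contra hk
      exact h ⟨k, k.cast_nonneg, pos_iff_ne_zero.2 hk⟩
    have hcover : (⋃ k : ℕ, {ω | X ω ≤ k}) = Set.univ :=
      Set.iUnion_eq_univ_iff.2 fun ω => exists_nat_ge (X ω)
    exact NeZero.ne μ (Measure.measure_univ_eq_zero.1 (hcover ▸ measure_iUnion_null hnull))
  obtain ⟨z, hz, hzc⟩ := exists_lt_of_csInf_lt hne hc
  exact hz.2.trans_le (measure_mono fun ω hω => le_trans hω hzc.le)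

end Ends

section IID

variable {Ω : Type*} [MeasurableSpace Ω] {μ : Measure Ω}

lemma measure_forall_lt_mem_pos [IsProbabilityMeasure μ] {β : Type*} [MeasurableSpace β]
    {X : ℕ → Ω → β} (hindep : iIndepFun X μ) (hident : ∀ n, IdentDistrib (X n) (X 0) μ μ)
    {s : Set β} (hs : MeasurableSet s) (h : 0 < μ (X 0 ⁻¹' s)) (N : ℕ) :
    0 < μ {ω | ∀ n < N, X n ω ∈ s} := by
  have hset : {ω | ∀ n < N, X n ω ∈ s} = ⋂ n ∈ Finset.range N, X n ⁻¹' s := by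
    ext
    simp
  rw [hset, hindep.measure_inter_preimage_eq_mul _ fun _ _ => hs,
    Finset.prod_congr rfl fun n _ => (hident n).measure_mem_eq hs, Finset.prod_const]
  exact ENNReal.pow_pos h _

lemma ae_lowerEnd_le {ε : ℕ → Ω → ℝ} (hpos : ∀ ω, 0 ≤ ε 0 ω)
    (hident : ∀ n, IdentDistrib (ε n) (ε 0) μ μ) :
    ∀ᵐ ω ∂μ, ∀ n, lowerEnd (ε 0) μ ≤ ε n ω := by
  refine ae_all_iff.2 fun n => ae_iff.2 ?_
  simp only [not_le]
  exact ((hident n).measure_mem_eq measurableSet_Iio).trans (measure_lt_lowerEnd_eq_zero hpos)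

lemma ofReal_one_div_sub_one_le_upperEnd_Z [IsProbabilityMeasure μ] {ε : ℕ → Ω → ℝ}
    (hpos : ∀ n ω, 0 < ε n ω) (hindep : iIndepFun ε μ)
    (hident : ∀ n, IdentDistrib (ε n) (ε 0) μ μ) {c : ℝ} (hc : 1 < c)
    (hmc : lowerEnd (ε 0) μ < c) :
    ENNReal.ofReal (1 / (c - 1)) ≤ upperEnd (Z ε) μ := by
  rw [← tsum_ofReal_inv_pow_succ hc, ENNReal.tsum_eq_iSup_nat]
  refine iSup_le fun N => le_sSup ?_
  exact (measure_forall_lt_mem_pos hindep hident measurableSet_Iic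
    (measure_le_pos_of_lowerEnd_lt hmc) N).trans_le
    (measure_mono fun ω hω => sum_ofReal_inv_pow_succ_le_Z (fun n => hpos n ω) hω)

end IID

theorem essSup_Z_eq_general
    {Ω : Type*} [MeasurableSpace Ω] (μ : Measure Ω) [IsProbabilityMeasure μ]
    (ε : ℕ → Ω → ℝ)
    (hpos : ∀ n ω, 0 < ε n ω)
    (hindep : iIndepFun ε μ)
    (hident : ∀ n, IdentDistrib (ε n) (ε 0) μ μ)
    (m : ℝ) (hm : m = sInf {z : ℝ | 0 ≤ z ∧ 0 < μ {ω | ε 0 ω ≤ z}})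
    (d₂ : ℝ≥0∞) (hd₂ : d₂ = sSup {z : ℝ≥0∞ | 0 < μ {ω | z ≤ Z ε ω}}) :
    (1 < m → d₂ = ENNReal.ofReal (1 / (m - 1))) ∧
      (m ≤ 1 → d₂ = ∞ ∧
        ∀ A : ℝ, 0 < A → 0 < μ {ω | ENNReal.ofReal A ≤ Z ε ω}) := by
  change m = lowerEnd (ε 0) μ at hm
  change d₂ = upperEnd (Z ε) μ at hd₂
  have hlow : ∀ t : ℝ, 0 < t → (m - 1) * t < 1 → ENNReal.ofReal t ≤ d₂ := by
    intro t ht htm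
    -- `t = 1 / (c - 1)` for `c = 1 + 1 / t`
    have hc : m < 1 + 1 / t := by linarith [(lt_div_iff₀ ht).2 htm]
    simpa [hd₂] using ofReal_one_div_sub_one_le_upperEnd_Z hpos hindep hident
      (lt_add_of_pos_right 1 (one_div_pos.2 ht)) (hm ▸ hc)
  refine ⟨fun h1 => le_antisymm ?_ ?_, fun h1 => ?_⟩
  · rw [hd₂]
    exact upperEnd_le_of_ae_le ((ae_lowerEnd_le (fun ω => (hpos 0 ω).le) hident).mono
      fun ω hω => Z_le_of_forall_le h1 (hm ▸ hω))
  · have hL : 0 < 1 / (m - 1) := one_div_pos.2 (sub_pos.2 h1)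
    refine le_of_tendsto ((ENNReal.continuous_ofReal.tendsto _).mono_left nhdsWithin_le_nhds)
      (Filter.mem_of_superset (Ioo_mem_nhdsLT hL) fun t ht =>
        hlow t ht.1 ((lt_div_iff₀' (sub_pos.2 h1)).1 ht.2))
  · have htop : d₂ = ∞ := ENNReal.eq_top_of_forall_nnreal_le fun r => by
      rw [← ENNReal.ofReal_coe_nnreal]
      exact (ENNReal.ofReal_le_ofReal (le_add_of_nonneg_right zero_le_one)).trans
        (hlow _ (by positivity) (by nlinarith [r.coe_nonneg]))
    refine ⟨htop, fun A _ => measure_le_pos_of_lt_upperEnd ?_⟩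
    rw [← hd₂, htop]
    exact ENNReal.ofReal_lt_top

/-- Let `d₂ = sup {z : P(Z ≥ z) > 0}` be the essential supremum of `Z` and `m`
the essential infimum of `ε₁`.  If `m > 1` then `d₂ = 1/(m-1)`; if `m ≤ 1` then
`d₂ = ∞`, i.e. `P(Z ≥ A) > 0` for every `A > 0`. -/
theorem essSup_Z_eq
    {Ω : Type*} [MeasurableSpace Ω] (μ : Measure Ω) [IsProbabilityMeasure μ]
    (ε : ℕ → Ω → ℝ) (hmeas : ∀ n, Measurable (ε n))
    (hpos : ∀ n ω, 0 < ε n ω)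
    (hindep : iIndepFun ε μ)
    (hident : ∀ n, IdentDistrib (ε n) (ε 0) μ μ)
    (hint : Integrable (fun ω => Real.log (ε 0 ω)) μ)
    (hE : 0 < ∫ ω, Real.log (ε 0 ω) ∂μ)
    (m : ℝ) (hm : m = sInf {z : ℝ | 0 ≤ z ∧ 0 < μ {ω | ε 0 ω ≤ z}})
    (d₂ : ℝ≥0∞) (hd₂ : d₂ = sSup {z : ℝ≥0∞ | 0 < μ {ω | z ≤ Z ε ω}}) :
    (1 < m → d₂ = ENNReal.ofReal (1 / (m - 1))) ∧
      (m ≤ 1 → d₂ = ∞ ∧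
        ∀ A : ℝ, 0 < A → 0 < μ {ω | ENNReal.ofReal A ≤ Z ε ω}) :=
  essSup_Z_eq_general μ ε hpos hindep hident m hm d₂ hd₂
end

section
/- Let (ε_n) be i.i.d. strictly positive random variables, and for n ≥ 1 define Z_n = ∑_{j=1}^{n}(ε_1⋯ε_j)^{−1}, with moments β_r^{(n)} = E[Z_n^r] and γ_r = E[ε_1^{−r}] (assumed finite). Then the moments satisfy the recursion β_r^{(n)} = γ_r · ∑_{j=0}^{r} C(r,j) β_j^{(n−1)}, with β_0^{(n)} = 1 for all n ≥ 1 and β_r^{(0)} = 0 for all r ≥ 1. -/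
/-! Writing `ε'ᵢ = εᵢ₊₁`, one has `Z_n = ε₁⁻¹ (1 + Z'_{n-1})`, where `Z'_{n-1}` is built from
`ε'` and hence independent of `ε₁`. Expanding `(1 + Z'_{n-1})^r` binomially and integrating
gives the recursion, with the moments of `Z'_{n-1}` in place of those of `Z_{n-1}`. These agree:
by induction on `n`, the moments of `Z_n` built from any shift of `ε` obey the same recursion
with the same coefficients `γ_r`, starting from `Z_0 = 0`. -/

open MeasureTheory ProbabilityTheory
open scoped ENNReal

/-- The finite-horizon series `Z_n = ∑_{j=1}^{n} (ε_1⋯ε_j)⁻¹` (with `ε i`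
playing the role of `ε_{i+1}`), valued in `ℝ≥0∞`; `Z_0 = 0`. -/
noncomputable def Zfin {Ω : Type*} (ε : ℕ → Ω → ℝ) (n : ℕ) (ω : Ω) : ℝ≥0∞ :=
  ∑ j ∈ Finset.range n, ENNReal.ofReal ((∏ i ∈ Finset.range (j + 1), ε i ω)⁻¹)

open Finset

section

variable {Ω : Type*}

lemma Zfin_zero (ε : ℕ → Ω → ℝ) : Zfin ε 0 = 0 := by
  funext ω
  simp [Zfin]

lemma Zfin_succ {η : ℕ → Ω → ℝ} {ω : Ω} (h0 : 0 ≤ η 0 ω) (m : ℕ) :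
    Zfin η (m + 1) ω = ENNReal.ofReal (η 0 ω)⁻¹ * (1 + Zfin (fun i => η (i + 1)) m ω) := by
  simp only [Zfin, sum_range_succ', zero_add, prod_range_one, mul_add, mul_one, mul_sum]
  rw [add_comm]
  congr 1
  refine sum_congr rfl fun j _ => ?_
  rw [prod_range_succ' _ (j + 1), mul_comm, mul_inv, ENNReal.ofReal_mul (inv_nonneg.2 h0)]

lemma measurable_Zfin {m : MeasurableSpace Ω} {ε : ℕ → Ω → ℝ} (hmeas : ∀ i, Measurable (ε i))
    (n : ℕ) : Measurable (Zfin ε n) :=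
  Finset.measurable_sum _ fun _ _ =>
    ENNReal.measurable_ofReal.comp (Finset.measurable_prod _ fun i _ => hmeas i).inv

lemma lintegral_mul_one_add_pow_of_indepFun [MeasurableSpace Ω] {μ : Measure Ω}
    {a W : Ω → ℝ≥0∞} (ha : Measurable a) (hW : Measurable W) (haW : IndepFun a W μ) (r : ℕ) :
    ∫⁻ ω, (a ω * (1 + W ω)) ^ r ∂μ
      = (∫⁻ ω, a ω ^ r ∂μ) * ∑ j ∈ range (r + 1), (r.choose j : ℝ≥0∞) * ∫⁻ ω, W ω ^ j ∂μ := by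
  have hexpand : ∀ ω, (a ω * (1 + W ω)) ^ r
      = ∑ j ∈ range (r + 1), (r.choose j : ℝ≥0∞) * (a ω ^ r * W ω ^ j) := fun ω => by
    rw [mul_pow, add_comm, add_pow, mul_sum]
    exact sum_congr rfl fun j _ => by ring
  have hmoment : ∀ j, ∫⁻ ω, a ω ^ r * W ω ^ j ∂μ = (∫⁻ ω, a ω ^ r ∂μ) * ∫⁻ ω, W ω ^ j ∂μ :=
    fun j => lintegral_mul_eq_lintegral_mul_lintegral_of_indepFun'' (ha.pow_const r).aemeasurable
      (hW.pow_const j).aemeasurable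
      (haW.comp (measurable_id.pow_const r) (measurable_id.pow_const j))
  simp_rw [hexpand]
  rw [lintegral_finsetSum _ fun j _ => by fun_prop, mul_sum]
  refine sum_congr rfl fun j _ => ?_
  rw [lintegral_const_mul _ (by fun_prop), hmoment]
  ring

variable [MeasurableSpace Ω] {μ : Measure Ω} {ε : ℕ → Ω → ℝ}

lemma ProbabilityTheory.iIndepFun.indepFun_Zfin_shift (hmeas : ∀ n, Measurable (ε n))
    (hindep : iIndepFun ε μ) (k m : ℕ) : IndepFun (ε k) (Zfin (fun i => ε (i + (k + 1))) m) μ := by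
  have hsup := indep_iSup_of_disjoint (fun i => (hmeas i).comap_le) hindep.iIndep
    (Set.disjoint_singleton_left.2 (Set.self_notMem_Ioi (a := k)))
  refine indep_of_indep_of_le hsup ?_ ?_
  · exact le_iSup₂ (f := fun i _ => MeasurableSpace.comap (ε i) inferInstance) k
      (Set.mem_singleton k)
  · refine Measurable.comap_le (measurable_Zfin (fun i => ?_) m)
    refine (comap_measurable (ε (i + (k + 1)))).mono ?_ le_rfl
    exact le_iSup₂ (f := fun i _ => MeasurableSpace.comap (ε i) inferInstance) (i + (k + 1))
      (by simp only [Set.mem_Ioi]; omega)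

lemma lintegral_ofReal_inv_pow_eq (hpos : ∀ n ω, 0 ≤ ε n ω)
    (hident : ∀ n, IdentDistrib (ε n) (ε 0) μ μ) (k r : ℕ) :
    ∫⁻ ω, ENNReal.ofReal (ε k ω)⁻¹ ^ r ∂μ = ∫⁻ ω, ENNReal.ofReal ((ε 0 ω)⁻¹ ^ r) ∂μ := by
  simp_rw [← ENNReal.ofReal_pow (inv_nonneg.2 (hpos k _))]
  exact ((hident k).comp (u := fun x : ℝ => ENNReal.ofReal (x⁻¹ ^ r))
    (ENNReal.measurable_ofReal.comp (measurable_inv.pow_const r))).lintegral_eq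

variable (hmeas : ∀ n, Measurable (ε n)) (hpos : ∀ n ω, 0 ≤ ε n ω) (hindep : iIndepFun ε μ)
  (hident : ∀ n, IdentDistrib (ε n) (ε 0) μ μ)
include hmeas hpos hindep hident

lemma lintegral_Zfin_shift_succ_pow (k m r : ℕ) :
    ∫⁻ ω, Zfin (fun i => ε (i + k)) (m + 1) ω ^ r ∂μ
      = (∫⁻ ω, ENNReal.ofReal ((ε 0 ω)⁻¹ ^ r) ∂μ) * ∑ j ∈ range (r + 1),
          (r.choose j : ℝ≥0∞) * ∫⁻ ω, Zfin (fun i => ε (i + (k + 1))) m ω ^ j ∂μ := by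
  have hsplit : ∀ ω, Zfin (fun i => ε (i + k)) (m + 1) ω
      = ENNReal.ofReal (ε k ω)⁻¹ * (1 + Zfin (fun i => ε (i + (k + 1))) m ω) := fun ω => by
    rw [Zfin_succ (by simpa using hpos k ω)]
    simp only [zero_add, add_right_comm _ 1 k, add_assoc]
  have hindep' : IndepFun (fun ω => ENNReal.ofReal (ε k ω)⁻¹)
      (Zfin (fun i => ε (i + (k + 1))) m) μ :=
    (hindep.indepFun_Zfin_shift hmeas k m).comp (ENNReal.measurable_ofReal.comp measurable_inv)
      measurable_id
  simp_rw [hsplit, ← lintegral_ofReal_inv_pow_eq hpos hident k r]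
  exact lintegral_mul_one_add_pow_of_indepFun (by fun_prop) (measurable_Zfin (fun i => hmeas _) m)
    hindep' r

lemma lintegral_Zfin_shift_pow (k m r : ℕ) :
    ∫⁻ ω, Zfin (fun i => ε (i + k)) m ω ^ r ∂μ = ∫⁻ ω, Zfin ε m ω ^ r ∂μ := by
  induction m generalizing k r with
  | zero => simp [Zfin_zero]
  | succ m ih =>
    have h0 := lintegral_Zfin_shift_succ_pow hmeas hpos hindep hident 0 m r
    simp only [add_zero, zero_add] at h0
    rw [lintegral_Zfin_shift_succ_pow hmeas hpos hindep hident, h0]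
    simp only [ih]

end

theorem Zfin_moment_recursion_general
    {Ω : Type*} [MeasurableSpace Ω] (μ : Measure Ω) [IsProbabilityMeasure μ]
    (ε : ℕ → Ω → ℝ) (hmeas : ∀ n, Measurable (ε n))
    (hpos : ∀ n ω, 0 < ε n ω)
    (hindep : iIndepFun ε μ)
    (hident : ∀ n, IdentDistrib (ε n) (ε 0) μ μ)
    (γ : ℕ → ℝ≥0∞) (hγ : ∀ s, γ s = ∫⁻ ω, ENNReal.ofReal ((ε 0 ω)⁻¹ ^ s) ∂μ)
    (β : ℕ → ℕ → ℝ≥0∞) (hβ : ∀ r n, β r n = ∫⁻ ω, Zfin ε n ω ^ r ∂μ) :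
    (∀ n, 1 ≤ n → β 0 n = 1) ∧
    (∀ r, 1 ≤ r → β r 0 = 0) ∧
    (∀ r n, 1 ≤ n →
      β r n = γ r * ∑ j ∈ Finset.range (r + 1),
        (r.choose j : ℝ≥0∞) * β j (n - 1)) := by
  have hnonneg : ∀ n ω, 0 ≤ ε n ω := fun n ω => (hpos n ω).le
  refine ⟨fun n _ => by simp [hβ], fun r hr => ?_, fun r n hn => ?_⟩
  · simp [hβ, Zfin_zero, zero_pow (Nat.one_le_iff_ne_zero.1 hr)]
  · obtain ⟨m, rfl⟩ : ∃ m, n = m + 1 := ⟨n - 1, by omega⟩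
    have hstep := lintegral_Zfin_shift_succ_pow hmeas hnonneg hindep hident 0 m r
    simp only [add_zero, zero_add, lintegral_Zfin_shift_pow hmeas hnonneg hindep hident] at hstep
    simp only [hβ, hγ, hstep, add_tsub_cancel_right]

/-- Finite-horizon moment recursion: with `β_r^{(n)} = E[Z_n^r]` and
`γ_r = E[ε₁^{-r}]` (assumed finite), one has
`β_r^{(n)} = γ_r · ∑_{j=0}^{r} C(r,j) β_j^{(n-1)}` for `n ≥ 1`, together with
`β_0^{(n)} = 1` for `n ≥ 1` and `β_r^{(0)} = 0` for `r ≥ 1`. -/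
theorem Zfin_moment_recursion
    {Ω : Type*} [MeasurableSpace Ω] (μ : Measure Ω) [IsProbabilityMeasure μ]
    (ε : ℕ → Ω → ℝ) (hmeas : ∀ n, Measurable (ε n))
    (hpos : ∀ n ω, 0 < ε n ω)
    (hindep : iIndepFun ε μ)
    (hident : ∀ n, IdentDistrib (ε n) (ε 0) μ μ)
    (γ : ℕ → ℝ≥0∞) (hγ : ∀ s, γ s = ∫⁻ ω, ENNReal.ofReal ((ε 0 ω)⁻¹ ^ s) ∂μ)
    (hγfin : ∀ s, γ s < ∞)
    (β : ℕ → ℕ → ℝ≥0∞) (hβ : ∀ r n, β r n = ∫⁻ ω, Zfin ε n ω ^ r ∂μ) :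
    (∀ n, 1 ≤ n → β 0 n = 1) ∧
    (∀ r, 1 ≤ r → β r 0 = 0) ∧
    (∀ r n, 1 ≤ n →
      β r n = γ r * ∑ j ∈ Finset.range (r + 1),
        (r.choose j : ℝ≥0∞) * β j (n - 1)) :=
  Zfin_moment_recursion_general μ ε hmeas hpos hindep hident γ hγ β hβ
end
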